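/- arXiv:1705.08510 — 6 statements merged into one kernel-verified Lean document; each statement's English description precedes it below -/
import Mathlib

section
/- The coordinate-wise integrator exactly preserves the Hamiltonian with Laplace kinetic energy: for every (θ, p) ∈ ℝ^d × ℝ^d, writing (θ', p') = Ψ(θ, p), one has U(θ') + Σ_{j=1}^d m_j⁻¹ |p'_j| = U(θ) + Σ_{j=1}^d m_j⁻¹ |p_j|. -/
/-!
Only the `i`-th momentum changes. On a rejection it is negated, so neither `U` nor `|pᵢ|`
changes. On an acceptance `pᵢ ≠ 0` (otherwise `θ* = θ` and `ΔU = 0`), and the acceptance test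
`mᵢ ΔU < |pᵢ|` says that the kick `sign(pᵢ) mᵢ ΔU` does not flip the sign of `pᵢ`; hence
`|pᵢ'| = |pᵢ| - mᵢ ΔU`, and the kinetic energy drops by exactly `ΔU`.
-/

open MeasureTheory

/-- The coordinate-wise integrator of discontinuous HMC: given `(θ, p)`, set
`θ* = θ + ε mᵢ⁻¹ sign(pᵢ) eᵢ` and `ΔU = U θ* − U θ`; if `mᵢ⁻¹ |pᵢ| > ΔU` then
move to `(θ*, p − sign(pᵢ) mᵢ ΔU eᵢ)`, otherwise negate the `i`-th momentum. -/
noncomputable def coordIntegrator (d : ℕ) (i : Fin d) (m : Fin d → ℝ) (ε : ℝ)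
    (U : (Fin d → ℝ) → ℝ) (x : (Fin d → ℝ) × (Fin d → ℝ)) :
    (Fin d → ℝ) × (Fin d → ℝ) :=
  let θ := x.1
  let p := x.2
  let θs := θ + (ε * (m i)⁻¹ * Real.sign (p i)) • (Pi.single i 1 : Fin d → ℝ)
  let ΔU := U θs - U θ
  if (m i)⁻¹ * |p i| > ΔU then
    (θs, p - (Real.sign (p i) * m i * ΔU) • (Pi.single i 1 : Fin d → ℝ))
  else
    (θ, p - (2 * p i) • (Pi.single i 1 : Fin d → ℝ))

theorem sum_mul_abs_of_eq_of_ne {ι : Type*} [Fintype ι] (w p q : ι → ℝ) (i : ι)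
    (h : ∀ j ≠ i, q j = p j) :
    ∑ j, w j * |q j| = ∑ j, w j * |p j| + w i * (|q i| - |p i|) := by
  rw [← sub_eq_iff_eq_add', ← Finset.sum_sub_distrib, mul_sub]
  refine Finset.sum_eq_single i (fun j _ hj => by rw [h j hj, sub_self]) (by simp)

theorem sum_mul_abs_sub_smul_single {ι : Type*} [Fintype ι] [DecidableEq ι] (w p : ι → ℝ)
    (i : ι) (c : ℝ) :
    ∑ j, w j * |(p - c • (Pi.single i 1 : ι → ℝ)) j|
      = ∑ j, w j * |p j| + w i * (|p i - c| - |p i|) := by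
  rw [sum_mul_abs_of_eq_of_ne w p _ i fun j hj => by simp [hj]]
  simp

theorem abs_sub_sign_mul_of_le_abs {a b : ℝ} (ha : a ≠ 0) (hb : b ≤ |a|) :
    |a - Real.sign a * b| = |a| - b := by
  rcases ha.lt_or_gt with ha | ha
  · rw [Real.sign_of_neg ha, abs_of_neg ha] at *
    rw [abs_of_nonpos (by linarith)]
    ring
  · rw [Real.sign_of_pos ha, abs_of_pos ha] at *
    rw [abs_of_nonneg (by linarith)]
    ring

theorem coordIntegrator_preserves_hamiltonian_general
    (d : ℕ) (i : Fin d) (m : Fin d → ℝ) (hm : ∀ j, 0 < m j)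
    (ε : ℝ) (U : (Fin d → ℝ) → ℝ) (θ p : Fin d → ℝ) :
    U (coordIntegrator d i m ε U (θ, p)).1
        + ∑ j, (m j)⁻¹ * |(coordIntegrator d i m ε U (θ, p)).2 j|
      = U θ + ∑ j, (m j)⁻¹ * |p j| := by
  simp only [coordIntegrator, gt_iff_lt]
  set θs := θ + (ε * (m i)⁻¹ * Real.sign (p i)) • (Pi.single i 1 : Fin d → ℝ)
  split_ifs with haccept
  · have hp : p i ≠ 0 := by
      intro hp
      simp [θs, hp] at haccept
    have hkick : m i * (U θs - U θ) ≤ |p i| := ((lt_inv_mul_iff₀ (hm i)).mp haccept).le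
    rw [sum_mul_abs_sub_smul_single, mul_assoc, abs_sub_sign_mul_of_le_abs hp hkick]
    field_simp [(hm i).ne']
    ring
  · rw [sum_mul_abs_sub_smul_single, show p i - 2 * p i = -p i by ring, abs_neg]
    ring

/-- The coordinate-wise integrator exactly preserves the Hamiltonian
`H(θ, p) = U(θ) + ∑ⱼ mⱼ⁻¹ |pⱼ|` with Laplace kinetic energy. -/
theorem coordIntegrator_preserves_hamiltonian
    (d : ℕ) (hd : 1 ≤ d) (i : Fin d) (m : Fin d → ℝ) (hm : ∀ j, 0 < m j)
    (ε : ℝ) (hε : 0 < ε) (U : (Fin d → ℝ) → ℝ) (θ p : Fin d → ℝ) :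
    U (coordIntegrator d i m ε U (θ, p)).1
        + ∑ j, (m j)⁻¹ * |(coordIntegrator d i m ε U (θ, p)).2 j|
      = U θ + ∑ j, (m j)⁻¹ * |p j| :=
  coordIntegrator_preserves_hamiltonian_general d i m hm ε U θ p
end

section
/- The coordinate-wise integrator is reversible: letting R(θ, p) = (θ, −p) denote the momentum flip, for every (θ, p) ∈ ℝ^d × ℝ^d with p_i ≠ 0 one has (R ∘ Ψ)((R ∘ Ψ)(θ, p)) = (θ, p). -/
/-!
Both branches of `Ψ` are undone by flipping the momentum and applying `Ψ` again, i.e.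
`Ψ (R (Ψ x)) = R x`. A rejected step only changes the sign of `pᵢ`, so after the flip the
same move is proposed, rejected again, and the sign is restored. After an accepted step the
new momentum is `qᵢ = -sign(pᵢ) (|pᵢ| - mᵢ ΔU)`; the acceptance condition makes
`|pᵢ| - mᵢ ΔU > 0`, so the flipped momentum points back to `θ`, the energy change is `-ΔU`,
and the return move is accepted exactly because `|pᵢ| > 0`.
-/

namespace Real

theorem sign_sign_mul_sub_self {a b : ℝ} (hb : b < |a|) : sign (sign a * b - a) = -sign a := by
  obtain hn | rfl | hp := lt_trichotomy a 0
  · rw [abs_of_neg hn] at hb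
    rw [sign_of_neg hn, sign_of_pos (by linarith), neg_neg]
  · simp
  · rw [abs_of_pos hp] at hb
    rw [sign_of_pos hp, sign_of_neg (by linarith)]

theorem abs_sign_mul_sub_self {a b : ℝ} (ha : a ≠ 0) (hb : b ≤ |a|) :
    |sign a * b - a| = |a| - b := by
  obtain hn | hp := ha.lt_or_gt
  · rw [abs_of_neg hn] at hb ⊢
    rw [sign_of_neg hn, abs_of_nonneg (by linarith)]
    ring
  · rw [abs_of_pos hp] at hb ⊢
    rw [sign_of_pos hp, abs_of_nonpos (by linarith)]
    ring

end Real

namespace coordIntegrator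

variable {d : ℕ} (i : Fin d) (m : Fin d → ℝ) (ε : ℝ) (U : (Fin d → ℝ) → ℝ)

noncomputable def proposal (θ : Fin d → ℝ) (s : ℝ) : Fin d → ℝ :=
  θ + (ε * (m i)⁻¹ * s) • (Pi.single i 1 : Fin d → ℝ)

theorem proposal_proposal_neg (θ : Fin d → ℝ) (s : ℝ) :
    proposal i m ε (proposal i m ε θ s) (-s) = θ := by
  simp only [proposal, add_assoc, ← add_smul]
  simp

theorem of_accept {θ p : Fin d → ℝ}
    (h : (m i)⁻¹ * |p i| > U (proposal i m ε θ (Real.sign (p i))) - U θ) :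
    coordIntegrator d i m ε U (θ, p) =
      (proposal i m ε θ (Real.sign (p i)), p - (Real.sign (p i) * m i *
        (U (proposal i m ε θ (Real.sign (p i))) - U θ)) • (Pi.single i 1 : Fin d → ℝ)) :=
  if_pos h

theorem of_reject {θ p : Fin d → ℝ}
    (h : ¬ (m i)⁻¹ * |p i| > U (proposal i m ε θ (Real.sign (p i))) - U θ) :
    coordIntegrator d i m ε U (θ, p) = (θ, p - (2 * p i) • (Pi.single i 1 : Fin d → ℝ)) :=
  if_neg h

theorem flip_of_reject {θ p : Fin d → ℝ}
    (h : ¬ (m i)⁻¹ * |p i| > U (proposal i m ε θ (Real.sign (p i))) - U θ) :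
    coordIntegrator d i m ε U (θ, -(p - (2 * p i) • (Pi.single i 1 : Fin d → ℝ))) = (θ, -p) := by
  have hqi : (-(p - (2 * p i) • (Pi.single i 1 : Fin d → ℝ))) i = p i := by
    simp only [Pi.neg_apply, Pi.sub_apply, Pi.smul_apply, Pi.single_eq_same, smul_eq_mul, mul_one,
      neg_sub]
    ring
  rw [of_reject i m ε U (by rwa [hqi]), hqi]
  simp

theorem flip_of_accept (hm : 0 < m i) {θ p : Fin d → ℝ} (hp : p i ≠ 0)
    (h : (m i)⁻¹ * |p i| > U (proposal i m ε θ (Real.sign (p i))) - U θ) :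
    coordIntegrator d i m ε U (proposal i m ε θ (Real.sign (p i)), -(p - (Real.sign (p i) * m i *
        (U (proposal i m ε θ (Real.sign (p i))) - U θ)) • (Pi.single i 1 : Fin d → ℝ))) =
      (θ, -p) := by
  set s := Real.sign (p i)
  set ΔU := U (proposal i m ε θ s) - U θ
  set q := -(p - (s * m i * ΔU) • (Pi.single i 1 : Fin d → ℝ))
  have hqi : q i = s * (m i * ΔU) - p i := by
    simp only [q, neg_sub, Pi.sub_apply, Pi.smul_apply, Pi.single_eq_same, smul_eq_mul, mul_one]
    ring
  have hlt : m i * ΔU < |p i| := by rwa [gt_iff_lt, lt_inv_mul_iff₀ hm] at h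
  have hsign : Real.sign (q i) = -s := by rw [hqi]; exact Real.sign_sign_mul_sub_self hlt
  have habs : |q i| = |p i| - m i * ΔU := by rw [hqi]; exact Real.abs_sign_mul_sub_self hp hlt.le
  have hback : (m i)⁻¹ * |q i| > U θ - U (proposal i m ε θ s) := by
    rw [habs, mul_sub, inv_mul_cancel_left₀ hm.ne']
    have : 0 < (m i)⁻¹ * |p i| := mul_pos (inv_pos.mpr hm) (abs_pos.mpr hp)
    linarith
  rw [of_accept i m ε U (by rwa [hsign, proposal_proposal_neg]), hsign, proposal_proposal_neg]
  ext1
  · rfl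
  · simp only [q, ΔU]
    module

theorem apply_flip_apply (hm : 0 < m i) {θ p : Fin d → ℝ} (hp : p i ≠ 0) :
    coordIntegrator d i m ε U
        ((coordIntegrator d i m ε U (θ, p)).1, -(coordIntegrator d i m ε U (θ, p)).2) =
      (θ, -p) := by
  by_cases h : (m i)⁻¹ * |p i| > U (proposal i m ε θ (Real.sign (p i))) - U θ
  · rw [of_accept i m ε U h]
    exact flip_of_accept i m ε U hm hp h
  · rw [of_reject i m ε U h]
    exact flip_of_reject i m ε U h

end coordIntegrator

theorem coordIntegrator_reversible_general
    (d : ℕ) (i : Fin d) (m : Fin d → ℝ) (hm : 0 < m i)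
    (ε : ℝ) (U : (Fin d → ℝ) → ℝ)
    (θ p : Fin d → ℝ) (hp : p i ≠ 0) :
    let R : (Fin d → ℝ) × (Fin d → ℝ) → (Fin d → ℝ) × (Fin d → ℝ) := fun x => (x.1, -x.2)
    (R ∘ coordIntegrator d i m ε U) ((R ∘ coordIntegrator d i m ε U) (θ, p)) = (θ, p) := by
  intro R
  simp only [R, Function.comp_apply, coordIntegrator.apply_flip_apply i m ε U hm hp, neg_neg]

/-- The coordinate-wise integrator is reversible: with the momentum flip
`R(θ, p) = (θ, −p)`, for every `(θ, p)` with `pᵢ ≠ 0` one has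
`(R ∘ Ψ)((R ∘ Ψ)(θ, p)) = (θ, p)`. -/
theorem coordIntegrator_reversible
    (d : ℕ) (hd : 1 ≤ d) (i : Fin d) (m : Fin d → ℝ) (hm : 0 < m i)
    (ε : ℝ) (hε : 0 < ε) (U : (Fin d → ℝ) → ℝ)
    (θ p : Fin d → ℝ) (hp : p i ≠ 0) :
    let R : (Fin d → ℝ) × (Fin d → ℝ) → (Fin d → ℝ) × (Fin d → ℝ) := fun x => (x.1, -x.2)
    (R ∘ coordIntegrator d i m ε U) ((R ∘ coordIntegrator d i m ε U) (θ, p)) = (θ, p) :=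
  coordIntegrator_reversible_general d i m hm ε U θ p hp
end

section
/- The coordinate-wise integrator has unit Jacobian: let (θ, p) ∈ ℝ^d × ℝ^d with p_i ≠ 0, suppose U is differentiable at θ and at θ* = θ + ε m_i⁻¹ sign(p_i) e_i, and suppose the strict inequality m_i⁻¹ |p_i| > U(θ*) − U(θ) either holds on a neighborhood of (θ, p) or fails on a neighborhood of (θ, p). Then Ψ is differentiable at (θ, p) and the determinant of its derivative (as a linear map on ℝ^d × ℝ^d ≅ ℝ^{2d}) has absolute value 1. -/
/-!
Near a point with `pᵢ ≠ 0` at which the acceptance test is locally constant, `Ψ` agrees with a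
map `y ↦ a + y + φ y • w`, where `w = (0, eᵢ)`: on acceptance `φ` depends on `θ` alone, on
rejection `φ (θ, p) = -2 pᵢ`. The derivative `id + φ'(·) • w` is a transvection, whose
determinant `1 + φ' w` is `1` in the first case and `-1` in the second.
-/

open Filter Topology

theorem Real.eventually_sign_eq {X : Type*} [TopologicalSpace X] {f : X → ℝ} {x : X}
    (hf : ContinuousAt f x) (hx : f x ≠ 0) : ∀ᶠ y in 𝓝 x, Real.sign (f y) = Real.sign (f x) := by
  rcases hx.lt_or_gt with hneg | hpos
  · filter_upwards [hf.eventually (gt_mem_nhds hneg)] with y hy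
    rw [Real.sign_of_neg hy, Real.sign_of_neg hneg]
  · filter_upwards [hf.eventually (lt_mem_nhds hpos)] with y hy
    rw [Real.sign_of_pos hy, Real.sign_of_pos hpos]

theorem ContinuousLinearMap.det_id_add_smulRight {R V : Type*} [CommRing R] [TopologicalSpace R]
    [AddCommGroup V] [Module R V] [TopologicalSpace V] [IsTopologicalAddGroup V]
    [ContinuousSMul R V]
    [Module.Free R V] [Module.Finite R V] (f : V →L[R] R) (v : V) :
    LinearMap.det ((ContinuousLinearMap.id R V + f.smulRight v : V →L[R] V) : V →ₗ[R] V) =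
      1 + f v := by
  have h : ((ContinuousLinearMap.id R V + f.smulRight v : V →L[R] V) : V →ₗ[R] V) =
      LinearMap.transvection (f : Module.Dual R V) v :=
    LinearMap.ext fun _ => rfl
  rw [h, LinearMap.transvection.det]
  rfl

theorem hasFDerivAt_add_smul {𝕜 E : Type*} [NontriviallyNormedField 𝕜]
    [NormedAddCommGroup E] [NormedSpace 𝕜 E] {φ : E → 𝕜} {φ' : E →L[𝕜] 𝕜} {x : E}
    (hφ : HasFDerivAt φ φ' x) (w : E) :
    HasFDerivAt (fun y => y + φ y • w) (ContinuousLinearMap.id 𝕜 E + φ'.smulRight w) x :=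
  (hasFDerivAt_id x).add (hφ.smul_const w)

section CoordIntegrator

variable {d : ℕ} {i : Fin d} {m : Fin d → ℝ} {ε : ℝ} {U : (Fin d → ℝ) → ℝ} {θ p : Fin d → ℝ}

local notation "𝐞" => (Pi.single i 1 : Fin d → ℝ)

noncomputable def potentialJump (i : Fin d) (m : Fin d → ℝ) (ε : ℝ) (U : (Fin d → ℝ) → ℝ)
    (s : ℝ) (θ : Fin d → ℝ) : ℝ :=
  U (θ + (ε * (m i)⁻¹ * s) • Pi.single i 1) - U θ

def CoordAccepts (i : Fin d) (m : Fin d → ℝ) (ε : ℝ) (U : (Fin d → ℝ) → ℝ)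
    (x : (Fin d → ℝ) × (Fin d → ℝ)) : Prop :=
  (m i)⁻¹ * |x.2 i| > potentialJump i m ε U (Real.sign (x.2 i)) x.1

theorem coordIntegrator_of_accepts {x : (Fin d → ℝ) × (Fin d → ℝ)}
    (hx : CoordAccepts i m ε U x) :
    coordIntegrator d i m ε U x =
      ((ε * (m i)⁻¹ * Real.sign (x.2 i)) • 𝐞, 0) +
        (x + (-(Real.sign (x.2 i) * m i * potentialJump i m ε U (Real.sign (x.2 i)) x.1)) •
          ((0 : Fin d → ℝ), 𝐞)) := by
  unfold CoordAccepts potentialJump at hx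
  rw [coordIntegrator, if_pos hx]
  ext <;> simp [potentialJump, sub_eq_add_neg, add_comm]

theorem coordIntegrator_of_not_accepts {x : (Fin d → ℝ) × (Fin d → ℝ)}
    (hx : ¬CoordAccepts i m ε U x) :
    coordIntegrator d i m ε U x = x + (-2 * x.2 i) • ((0 : Fin d → ℝ), 𝐞) := by
  unfold CoordAccepts potentialJump at hx
  rw [coordIntegrator, if_neg hx]
  ext <;> simp [sub_eq_add_neg]

theorem hasFDerivAt_potentialJump (s : ℝ) (hU : DifferentiableAt ℝ U θ)
    (hU' : DifferentiableAt ℝ U (θ + (ε * (m i)⁻¹ * s) • 𝐞)) :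
    HasFDerivAt (potentialJump i m ε U s)
      (fderiv ℝ U (θ + (ε * (m i)⁻¹ * s) • 𝐞) - fderiv ℝ U θ) θ :=
  ((hasFDerivAt_comp_add_right _).2 hU'.hasFDerivAt).sub hU.hasFDerivAt

theorem hasFDerivAt_coordIntegrator_of_eventually_accepts (hp : p i ≠ 0)
    (hU : DifferentiableAt ℝ U θ)
    (hU' : DifferentiableAt ℝ U (θ + (ε * (m i)⁻¹ * Real.sign (p i)) • 𝐞))
    (hacc : ∀ᶠ x in 𝓝 (θ, p), CoordAccepts i m ε U x) :
    HasFDerivAt (coordIntegrator d i m ε U)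
      (ContinuousLinearMap.id ℝ _ +
        (-((Real.sign (p i) * m i) •
          (fderiv ℝ U (θ + (ε * (m i)⁻¹ * Real.sign (p i)) • 𝐞) - fderiv ℝ U θ).comp
            (ContinuousLinearMap.fst ℝ (Fin d → ℝ) (Fin d → ℝ)))).smulRight
          ((0 : Fin d → ℝ), 𝐞)) (θ, p) := by
  set s := Real.sign (p i)
  have hsign : ∀ᶠ x in 𝓝 (θ, p), Real.sign (x.2 i) = s :=
    Real.eventually_sign_eq (by fun_prop) hp
  have hJump := (hasFDerivAt_potentialJump s hU hU').comp (f := Prod.fst) (θ, p)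
    hasFDerivAt_fst
  refine ((hasFDerivAt_add_smul (hJump.const_mul (s * m i)).neg _).const_add
    ((ε * (m i)⁻¹ * s) • 𝐞, 0)).congr_of_eventuallyEq ?_
  filter_upwards [hsign, hacc] with x hxs hx
  rw [coordIntegrator_of_accepts hx, hxs]
  rfl

theorem hasFDerivAt_coordIntegrator_of_eventually_not_accepts {x : (Fin d → ℝ) × (Fin d → ℝ)}
    (hrej : ∀ᶠ y in 𝓝 x, ¬CoordAccepts i m ε U y) :
    HasFDerivAt (coordIntegrator d i m ε U)
      (ContinuousLinearMap.id ℝ _ +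
        ((-2 : ℝ) • (ContinuousLinearMap.proj i).comp
          (ContinuousLinearMap.snd ℝ (Fin d → ℝ) (Fin d → ℝ))).smulRight
          ((0 : Fin d → ℝ), 𝐞)) x :=
  (hasFDerivAt_add_smul (((ContinuousLinearMap.proj i).comp
    (ContinuousLinearMap.snd ℝ (Fin d → ℝ) (Fin d → ℝ))).hasFDerivAt.const_mul (-2)) _)
    |>.congr_of_eventuallyEq (hrej.mono fun _ => coordIntegrator_of_not_accepts)

end CoordIntegrator

theorem coordIntegrator_unit_jacobian_general
    (d : ℕ) (i : Fin d) (m : Fin d → ℝ)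
    (ε : ℝ) (U : (Fin d → ℝ) → ℝ)
    (θ p : Fin d → ℝ) (hp : p i ≠ 0)
    (hU₁ : DifferentiableAt ℝ U θ)
    (hU₂ : DifferentiableAt ℝ U
      (θ + (ε * (m i)⁻¹ * Real.sign (p i)) • (Pi.single i 1 : Fin d → ℝ)))
    (hC : (∀ᶠ x : (Fin d → ℝ) × (Fin d → ℝ) in nhds (θ, p),
            (m i)⁻¹ * |x.2 i| >
              U (x.1 + (ε * (m i)⁻¹ * Real.sign (x.2 i)) • (Pi.single i 1 : Fin d → ℝ))
                - U x.1)
        ∨ (∀ᶠ x : (Fin d → ℝ) × (Fin d → ℝ) in nhds (θ, p),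
            ¬((m i)⁻¹ * |x.2 i| >
              U (x.1 + (ε * (m i)⁻¹ * Real.sign (x.2 i)) • (Pi.single i 1 : Fin d → ℝ))
                - U x.1))) :
    DifferentiableAt ℝ (coordIntegrator d i m ε U) (θ, p) ∧
      |LinearMap.det ((fderiv ℝ (coordIntegrator d i m ε U) (θ, p)).toLinearMap)| = 1 := by
  obtain ⟨φ', hΨ, hφ'⟩ : ∃ φ' : ((Fin d → ℝ) × (Fin d → ℝ)) →L[ℝ] ℝ,
      HasFDerivAt (coordIntegrator d i m ε U)
        (ContinuousLinearMap.id ℝ _ + φ'.smulRight ((0 : Fin d → ℝ), Pi.single i 1)) (θ, p) ∧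
      |1 + φ' (0, Pi.single i 1)| = 1 := by
    rcases hC with hacc | hrej
    · exact ⟨_, hasFDerivAt_coordIntegrator_of_eventually_accepts hp hU₁ hU₂ hacc, by simp⟩
    · exact ⟨_, hasFDerivAt_coordIntegrator_of_eventually_not_accepts hrej, by norm_num⟩
  refine ⟨hΨ.differentiableAt, ?_⟩
  rw [hΨ.fderiv, ContinuousLinearMap.det_id_add_smulRight, hφ']

/-- The coordinate-wise integrator has unit Jacobian: at a point `(θ, p)` with
`pᵢ ≠ 0`, where `U` is differentiable at `θ` and at `θ* = θ + ε mᵢ⁻¹ sign(pᵢ) eᵢ`,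
and where the acceptance test `mᵢ⁻¹|pᵢ| > U(θ*) − U(θ)` either holds on a
neighborhood or fails on a neighborhood of `(θ, p)`, the map `Ψ` is
differentiable and the determinant of its derivative has absolute value `1`. -/
theorem coordIntegrator_unit_jacobian
    (d : ℕ) (hd : 1 ≤ d) (i : Fin d) (m : Fin d → ℝ) (hm : 0 < m i)
    (ε : ℝ) (hε : 0 < ε) (U : (Fin d → ℝ) → ℝ)
    (θ p : Fin d → ℝ) (hp : p i ≠ 0)
    (hU₁ : DifferentiableAt ℝ U θ)
    (hU₂ : DifferentiableAt ℝ U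
      (θ + (ε * (m i)⁻¹ * Real.sign (p i)) • (Pi.single i 1 : Fin d → ℝ)))
    (hC : (∀ᶠ x : (Fin d → ℝ) × (Fin d → ℝ) in nhds (θ, p),
            (m i)⁻¹ * |x.2 i| >
              U (x.1 + (ε * (m i)⁻¹ * Real.sign (x.2 i)) • (Pi.single i 1 : Fin d → ℝ))
                - U x.1)
        ∨ (∀ᶠ x : (Fin d → ℝ) × (Fin d → ℝ) in nhds (θ, p),
            ¬((m i)⁻¹ * |x.2 i| >
              U (x.1 + (ε * (m i)⁻¹ * Real.sign (x.2 i)) • (Pi.single i 1 : Fin d → ℝ))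
                - U x.1))) :
    DifferentiableAt ℝ (coordIntegrator d i m ε U) (θ, p) ∧
      |LinearMap.det ((fderiv ℝ (coordIntegrator d i m ε U) (θ, p)).toLinearMap)| = 1 :=
  coordIntegrator_unit_jacobian_general d i m ε U θ p hp hU₁ hU₂ hC
end

section
/- For every m > 0 and every Δ ∈ ℝ, the probability under the Laplace distribution with scale m that the scaled absolute momentum exceeds Δ equals the Metropolis acceptance probability: (1/(2m)) ∫_ℝ exp(−|p|/m) · 1{m⁻¹|p| > Δ} dp = min(1, exp(−Δ)). -/
/-!
The density and the event both depend on `p` only through `|p| / m`, so folding `ℝ` onto the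
half-line and rescaling by `m` turns the probability into `∫_{max 0 Δ}^∞ e^{-x} dx = e^{-max 0 Δ}`,
which is `min 1 e^{-Δ}` by monotonicity of `exp`.
-/

open MeasureTheory Set Real

theorem integral_comp_inv_mul_abs (f : ℝ → ℝ) {m : ℝ} (hm : 0 < m) :
    ∫ p, f (m⁻¹ * |p|) = 2 * m * ∫ x in Ioi 0, f x := by
  rw [integral_comp_abs (f := fun t => f (m⁻¹ * t)),
    integral_comp_mul_left_Ioi f 0 (inv_pos.2 hm), mul_zero, inv_inv, smul_eq_mul, mul_assoc]

theorem integral_Ioi_indicator_Ioi_exp_neg (a b : ℝ) :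
    ∫ x in Ioi a, (Ioi b).indicator (fun x => exp (-x)) x = exp (-max a b) := by
  rw [setIntegral_indicator measurableSet_Ioi, Ioi_inter_Ioi, integral_exp_neg_Ioi]

theorem exp_neg_max_zero (Δ : ℝ) : exp (-max 0 Δ) = min 1 (exp (-Δ)) := by
  rw [neg_sup, exp_monotone.map_min, neg_zero, exp_zero]

/-- The probability under the Laplace distribution with scale `m` that the
scaled absolute momentum exceeds `Δ` equals the Metropolis acceptance
probability: `(1/(2m)) ∫ exp(−|p|/m) 1{m⁻¹|p| > Δ} dp = min(1, exp(−Δ))`. -/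
theorem laplace_tail_eq_metropolis_acceptance (m Δ : ℝ) (hm : 0 < m) :
    (1 / (2 * m)) *
        ∫ p : ℝ, Real.exp (-|p| / m) * (if m⁻¹ * |p| > Δ then (1 : ℝ) else 0)
      = min 1 (Real.exp (-Δ)) := by
  have integrand_eq : ∀ p : ℝ,
      Real.exp (-|p| / m) * (if m⁻¹ * |p| > Δ then (1 : ℝ) else 0)
        = (Ioi Δ).indicator (fun x => exp (-x)) (m⁻¹ * |p|) := by
    intro p
    rw [neg_div, div_eq_inv_mul, indicator_apply, mul_ite, mul_one, mul_zero]
    rfl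
  simp_rw [integrand_eq]
  rw [integral_comp_inv_mul_abs _ hm, integral_Ioi_indicator_Ioi_exp_neg, exp_neg_max_zero]
  field_simp
end

section
/- The reflection/refraction map of discontinuous Hamiltonian dynamics is symplectic: let K : ℝ^d → ℝ be twice continuously differentiable, ν ∈ ℝ^d, and α, τ, Δ ∈ ℝ. Let γ : ℝ^d → ℝ be differentiable on an open set and satisfy K(p + γ(p)ν) = K(p) − Δ. Define t_e(θ, p) = (α − ⟨θ, ν⟩)/⟨∇K(p), ν⟩ and Φ(θ, p) = (θ + t_e(θ, p)∇K(p) + (τ − t_e(θ, p))∇K(p + γ(p)ν), p + γ(p)ν). Then at every point (θ, p) where ⟨∇K(p), ν⟩ ≠ 0 and ⟨∇K(p + γ(p)ν), ν⟩ ≠ 0, the map Φ is differentiable and its derivative DΦ preserves the standard symplectic form: ω(DΦ(θ,p) u, DΦ(θ,p) v) = ω(u, v) for all u, v ∈ ℝ^d × ℝ^d, where ω((a, b), (c, e)) = ⟨a, e⟩ − ⟨b, c⟩. -/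
/-!
At `(θ, p)` the derivative of `Φ` sends `(a, b)` to
`(a + s • (∇K p - ∇K q) + t_e • H_p b + (τ - t_e) • H_q (M b), M b)`, where `q = p + γ p • ν`,
`M b = b + Dγ(p) b • ν`, `s = Dt_e(a, b)` and `H` is the Hessian of `K`. Pairing the first
component with `M b'`, the derivative of the energy constraint, `⟪∇K q, M w⟫ = ⟪∇K p, w⟫`, and
the derivative of `t_e ⟪∇K p, ν⟫ = α - ⟪θ, ν⟫` cancel every term involving `Dγ` or `s`, leaving
`⟪a, b'⟫ + t_e ⟪H_p b, b'⟫ + (τ - t_e) ⟪H_q (M b), M b'⟫`. Antisymmetrising in `(a, b)`,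
`(a', b')`, the Hessian terms cancel because Hessians are symmetric.
-/

open InnerProductSpace RealInnerProductSpace Filter Topology

section

variable {E : Type*} [NormedAddCommGroup E] [InnerProductSpace ℝ E]

def momentumJump (γ : E → ℝ) (ν p : E) : E :=
  p + γ p • ν

theorem hasFDerivAt_momentumJump {γ : E → ℝ} {ν p : E} {ℓ : E →L[ℝ] ℝ}
    (hγ : HasFDerivAt γ ℓ p) :
    HasFDerivAt (momentumJump γ ν) (ContinuousLinearMap.id ℝ E + ℓ.smulRight ν) p :=
  (hasFDerivAt_id p).add (hγ.smul_const ν)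

theorem linearized_reflectRefract_symplectic {S S' : E →L[ℝ] E}
    (hS : (S : E →ₗ[ℝ] E).IsSymmetric) (hS' : (S' : E →ₗ[ℝ] E).IsSymmetric) {g g' ν : E}
    {ℓ : E → ℝ} (henergy : ∀ w, ⟪g', w + ℓ w • ν⟫ = ⟪g, w⟫) (t r : ℝ) {a b a' b' : E}
    {s s' : ℝ} (hs : ⟪a, ν⟫ + s * ⟪g, ν⟫ + t * ⟪S b, ν⟫ = 0)
    (hs' : ⟪a', ν⟫ + s' * ⟪g, ν⟫ + t * ⟪S b', ν⟫ = 0) :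
    ⟪a + s • (g - g') + t • S b + r • S' (b + ℓ b • ν), b' + ℓ b' • ν⟫ -
      ⟪b + ℓ b • ν, a' + s' • (g - g') + t • S b' + r • S' (b' + ℓ b' • ν)⟫ =
      ⟪a, b'⟫ - ⟪b, a'⟫ := by
  have expand : ∀ (a b b' : E) (s : ℝ),
      ⟪a + s • (g - g') + t • S b + r • S' (b + ℓ b • ν), b' + ℓ b' • ν⟫ =
        ⟪a, b'⟫ + t * ⟪S b, b'⟫ + r * ⟪S' (b + ℓ b • ν), b' + ℓ b' • ν⟫ +
          ℓ b' * (⟪a, ν⟫ + s * ⟪g, ν⟫ + t * ⟪S b, ν⟫) := by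
    intro a b b' s
    have henergy_b' := henergy b'
    simp only [inner_add_left, inner_sub_left, inner_smul_left, inner_add_right,
      inner_smul_right, RCLike.conj_to_real] at henergy_b' ⊢
    linear_combination (-s) * henergy_b'
  rw [real_inner_comm _ (b + ℓ b • ν), expand, expand, hs, hs', hS.apply_clm b',
    hS'.apply_clm (b' + ℓ b' • ν), real_inner_comm (S b), real_inner_comm (S' _),
    real_inner_comm a']
  ring

variable [CompleteSpace E]

section Gradient

variable {f : E → ℝ} {x : E}

theorem ContDiffAt.hasFDerivAt_gradient (hf : ContDiffAt ℝ 2 f x) :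
    HasFDerivAt (gradient f)
      ((toDual ℝ E).symm.toContinuousLinearEquiv.toContinuousLinearMap.comp
        (fderiv ℝ (fderiv ℝ f) x)) x :=
  (toDual ℝ E).symm.toContinuousLinearEquiv.hasFDerivAt.comp x
    ((hf.fderiv_right (m := 1) le_rfl).differentiableAt one_ne_zero).hasFDerivAt

theorem ContDiffAt.differentiableAt_gradient (hf : ContDiffAt ℝ 2 f x) :
    DifferentiableAt ℝ (gradient f) x :=
  hf.hasFDerivAt_gradient.differentiableAt

theorem ContDiffAt.isSymmetric_fderiv_gradient (hf : ContDiffAt ℝ 2 f x) :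
    (fderiv ℝ (gradient f) x : E →ₗ[ℝ] E).IsSymmetric := by
  intro u v
  have hsymm := hf.isSymmSndFDerivAt (by simp)
  simp only [ContinuousLinearMap.coe_coe, hf.hasFDerivAt_gradient.fderiv]
  rw [real_inner_comm _ u]
  simpa [toDual_symm_apply] using hsymm u v

end Gradient

noncomputable def eventTime (K : E → ℝ) (ν : E) (α : ℝ) (x : E × E) : ℝ :=
  (α - ⟪x.1, ν⟫) / ⟪gradient K x.2, ν⟫

noncomputable def reflectRefract (K γ : E → ℝ) (ν : E) (α τ : ℝ) (x : E × E) : E × E :=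
  (x.1 + eventTime K ν α x • gradient K x.2 +
      (τ - eventTime K ν α x) • gradient K (momentumJump γ ν x.2),
    momentumJump γ ν x.2)

variable {K γ : E → ℝ} {ν : E} {α τ Δ : ℝ}

theorem inner_gradient_momentumJump {p : E} (hKp : DifferentiableAt ℝ K p)
    (hKq : DifferentiableAt ℝ K (momentumJump γ ν p)) (hγ : DifferentiableAt ℝ γ p)
    (henergy : ∀ᶠ y in 𝓝 p, K (momentumJump γ ν y) = K y - Δ) (w : E) :
    ⟪gradient K (momentumJump γ ν p), w + fderiv ℝ γ p w • ν⟫ = ⟪gradient K p, w⟫ := by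
  have hcomp := hKq.hasFDerivAt.comp p (hasFDerivAt_momentumJump hγ.hasFDerivAt)
  have hshift : HasFDerivAt (fun y => K (momentumJump γ ν y)) (fderiv ℝ K p) p :=
    (hKp.hasFDerivAt.sub_const Δ).congr_of_eventuallyEq henergy
  simpa [inner_gradient_left] using congr($(hcomp.unique hshift) w)

theorem differentiableAt_eventTime {x : E × E} (hK : DifferentiableAt ℝ (gradient K) x.2)
    (hx : ⟪gradient K x.2, ν⟫ ≠ 0) : DifferentiableAt ℝ (eventTime K ν α) x := by
  have hden : DifferentiableAt ℝ (fun y : E × E => ⟪gradient K y.2, ν⟫) x :=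
    (hK.comp x differentiableAt_snd).inner ℝ (differentiableAt_const ν)
  unfold eventTime
  simp only [div_eq_mul_inv]
  exact ((differentiableAt_const α).fun_sub (differentiableAt_fst.inner ℝ
    (differentiableAt_const ν))).fun_mul (hden.fun_inv hx)

theorem inner_fst_add_fderiv_eventTime {x : E × E} (hK : DifferentiableAt ℝ (gradient K) x.2)
    (hx : ⟪gradient K x.2, ν⟫ ≠ 0) (u : E × E) :
    ⟪u.1, ν⟫ + fderiv ℝ (eventTime K ν α) x u * ⟪gradient K x.2, ν⟫ +
      eventTime K ν α x * ⟪fderiv ℝ (gradient K) x.2 u.2, ν⟫ = 0 := by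
  have hden : HasFDerivAt (fun y : E × E => ⟪gradient K y.2, ν⟫)
      ((fderivInnerCLM ℝ (gradient K x.2, ν)).comp
        (((fderiv ℝ (gradient K) x.2).comp (ContinuousLinearMap.snd ℝ E E)).prod 0)) x :=
    (hK.hasFDerivAt.comp x hasFDerivAt_snd).inner ℝ (hasFDerivAt_const ν x)
  have hprod := (differentiableAt_eventTime hK hx (α := α)).hasFDerivAt.mul hden
  have hnum := (hasFDerivAt_const α x).sub (hasFDerivAt_fst.inner ℝ (hasFDerivAt_const ν x))
  have hidentity : (fun y => eventTime K ν α y * ⟪gradient K y.2, ν⟫) =ᶠ[𝓝 x]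
      fun y => α - ⟪y.1, ν⟫ := by
    filter_upwards [hden.continuousAt.eventually_ne hx] with y hy
    exact div_mul_cancel₀ _ hy
  have hderiv := congr($((hprod.congr_of_eventuallyEq hidentity.symm).unique hnum) u)
  simp only [add_apply, smul_apply, ContinuousLinearMap.comp_apply, ContinuousLinearMap.prod_apply,
    ContinuousLinearMap.coe_snd', zero_apply, fderivInnerCLM_apply, inner_zero_right, zero_add,
    smul_eq_mul, zero_sub, neg_apply, ContinuousLinearMap.coe_fst'] at hderiv
  linear_combination hderiv

theorem hasFDerivAt_reflectRefract {x : E × E} (hKp : DifferentiableAt ℝ (gradient K) x.2)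
    (hKq : DifferentiableAt ℝ (gradient K) (momentumJump γ ν x.2))
    (hγ : DifferentiableAt ℝ γ x.2) (hx : ⟪gradient K x.2, ν⟫ ≠ 0) :
    ∃ L : E × E →L[ℝ] E × E, HasFDerivAt (reflectRefract K γ ν α τ) L x ∧ ∀ u, L u =
      (u.1 + fderiv ℝ (eventTime K ν α) x u •
            (gradient K x.2 - gradient K (momentumJump γ ν x.2)) +
          eventTime K ν α x • fderiv ℝ (gradient K) x.2 u.2 +
          (τ - eventTime K ν α x) • fderiv ℝ (gradient K) (momentumJump γ ν x.2)
            (u.2 + fderiv ℝ γ x.2 u.2 • ν),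
        u.2 + fderiv ℝ γ x.2 u.2 • ν) := by
  have hte := (differentiableAt_eventTime (α := α) hKp hx).hasFDerivAt
  have hjump := (hasFDerivAt_momentumJump (ν := ν) hγ.hasFDerivAt).comp x hasFDerivAt_snd
  refine ⟨_, ((hasFDerivAt_fst.add (hte.smul (hKp.hasFDerivAt.comp x hasFDerivAt_snd))).add
    (((hasFDerivAt_const τ x).sub hte).smul (hKq.hasFDerivAt.comp x hjump))).prodMk hjump,
    fun u => ?_⟩
  simp only [ContinuousLinearMap.prod_apply, add_apply, smul_apply, sub_apply, zero_apply,
    ContinuousLinearMap.comp_apply, ContinuousLinearMap.coe_fst', ContinuousLinearMap.coe_snd',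
    ContinuousLinearMap.id_apply, ContinuousLinearMap.smulRight_apply, Function.comp_apply,
    Pi.sub_apply, Prod.mk.injEq, and_true]
  module

end

theorem reflection_refraction_symplectic_general (d : ℕ)
    (K : EuclideanSpace ℝ (Fin d) → ℝ) (hK : ContDiff ℝ 2 K)
    (ν : EuclideanSpace ℝ (Fin d)) (α τ Δ : ℝ)
    (γ : EuclideanSpace ℝ (Fin d) → ℝ) (Ω : Set (EuclideanSpace ℝ (Fin d)))
    (hΩ : IsOpen Ω) (hγ : DifferentiableOn ℝ γ Ω)
    (hcons : ∀ p ∈ Ω, K (p + γ p • ν) = K p - Δ) :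
    let te : EuclideanSpace ℝ (Fin d) × EuclideanSpace ℝ (Fin d) → ℝ :=
      fun x => (α - ⟪x.1, ν⟫) / ⟪gradient K x.2, ν⟫
    let Φ : EuclideanSpace ℝ (Fin d) × EuclideanSpace ℝ (Fin d) →
        EuclideanSpace ℝ (Fin d) × EuclideanSpace ℝ (Fin d) :=
      fun x =>
        (x.1 + te x • gradient K x.2 + (τ - te x) • gradient K (x.2 + γ x.2 • ν),
          x.2 + γ x.2 • ν)
    let ω : EuclideanSpace ℝ (Fin d) × EuclideanSpace ℝ (Fin d) →
        EuclideanSpace ℝ (Fin d) × EuclideanSpace ℝ (Fin d) → ℝ :=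
      fun u v => ⟪u.1, v.2⟫ - ⟪u.2, v.1⟫
    ∀ θ : EuclideanSpace ℝ (Fin d), ∀ p ∈ Ω,
      ⟪gradient K p, ν⟫ ≠ 0 → ⟪gradient K (p + γ p • ν), ν⟫ ≠ 0 →
        DifferentiableAt ℝ Φ (θ, p) ∧
          ∀ u v : EuclideanSpace ℝ (Fin d) × EuclideanSpace ℝ (Fin d),
            ω (fderiv ℝ Φ (θ, p) u) (fderiv ℝ Φ (θ, p) v) = ω u v := by
  intro te Φ ω θ p hp hgp _
  have hKp : ContDiffAt ℝ 2 K p := hK.contDiffAt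
  have hKq : ContDiffAt ℝ 2 K (momentumJump γ ν p) := hK.contDiffAt
  have hγp : DifferentiableAt ℝ γ p := hγ.differentiableAt (hΩ.mem_nhds hp)
  have henergy : ∀ᶠ y in 𝓝 p, K (momentumJump γ ν y) = K y - Δ :=
    eventually_of_mem (hΩ.mem_nhds hp) hcons
  obtain ⟨L, hL, hL_apply⟩ := hasFDerivAt_reflectRefract (α := α) (τ := τ) (x := (θ, p))
    hKp.differentiableAt_gradient hKq.differentiableAt_gradient hγp hgp
  have hΦ : HasFDerivAt Φ L (θ, p) := hL
  refine ⟨hΦ.differentiableAt, fun u v => ?_⟩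
  rw [hΦ.fderiv, hL_apply, hL_apply]
  exact linearized_reflectRefract_symplectic hKp.isSymmetric_fderiv_gradient
    hKq.isSymmetric_fderiv_gradient
    (inner_gradient_momentumJump (hKp.differentiableAt two_ne_zero)
      (hKq.differentiableAt two_ne_zero) hγp henergy) _ _
    (inner_fst_add_fderiv_eventTime hKp.differentiableAt_gradient hgp u)
    (inner_fst_add_fderiv_eventTime hKp.differentiableAt_gradient hgp v)

/-- The reflection/refraction map of discontinuous Hamiltonian dynamics is
symplectic: with `K` twice continuously differentiable,
`t_e(θ, p) = (α − ⟨θ, ν⟩)/⟨∇K(p), ν⟩`, and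
`Φ(θ, p) = (θ + t_e ∇K(p) + (τ − t_e) ∇K(p + γ(p)ν), p + γ(p)ν)` where the
differentiable function `γ` satisfies the energy constraint
`K(p + γ(p)ν) = K(p) − Δ`, the map `Φ` is differentiable at every point where
`⟨∇K(p), ν⟩ ≠ 0` and `⟨∇K(p + γ(p)ν), ν⟩ ≠ 0`, and its derivative preserves the
standard symplectic form `ω((a,b),(c,e)) = ⟨a, e⟩ − ⟨b, c⟩`. -/
theorem reflection_refraction_symplectic (d : ℕ) (hd : 1 ≤ d)
    (K : EuclideanSpace ℝ (Fin d) → ℝ) (hK : ContDiff ℝ 2 K)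
    (ν : EuclideanSpace ℝ (Fin d)) (α τ Δ : ℝ)
    (γ : EuclideanSpace ℝ (Fin d) → ℝ) (Ω : Set (EuclideanSpace ℝ (Fin d)))
    (hΩ : IsOpen Ω) (hγ : DifferentiableOn ℝ γ Ω)
    (hcons : ∀ p ∈ Ω, K (p + γ p • ν) = K p - Δ) :
    let te : EuclideanSpace ℝ (Fin d) × EuclideanSpace ℝ (Fin d) → ℝ :=
      fun x => (α - ⟪x.1, ν⟫) / ⟪gradient K x.2, ν⟫
    let Φ : EuclideanSpace ℝ (Fin d) × EuclideanSpace ℝ (Fin d) →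
        EuclideanSpace ℝ (Fin d) × EuclideanSpace ℝ (Fin d) :=
      fun x =>
        (x.1 + te x • gradient K x.2 + (τ - te x) • gradient K (x.2 + γ x.2 • ν),
          x.2 + γ x.2 • ν)
    let ω : EuclideanSpace ℝ (Fin d) × EuclideanSpace ℝ (Fin d) →
        EuclideanSpace ℝ (Fin d) × EuclideanSpace ℝ (Fin d) → ℝ :=
      fun u v => ⟪u.1, v.2⟫ - ⟪u.2, v.1⟫
    ∀ θ : EuclideanSpace ℝ (Fin d), ∀ p ∈ Ω,
      ⟪gradient K p, ν⟫ ≠ 0 → ⟪gradient K (p + γ p • ν), ν⟫ ≠ 0 →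
        DifferentiableAt ℝ Φ (θ, p) ∧
          ∀ u v : EuclideanSpace ℝ (Fin d) × EuclideanSpace ℝ (Fin d),
            ω (fderiv ℝ Φ (θ, p) u) (fderiv ℝ Φ (θ, p) v) = ω u v :=
  reflection_refraction_symplectic_general d K hK ν α τ Δ γ Ω hΩ hγ hcons
end

section
/- Energy error of the symplectic Euler step with explicit leading term: let U, K : ℝ^d → ℝ be three times continuously differentiable and fix (θ₀, p₀) ∈ ℝ^d × ℝ^d. For ε > 0 define p*(ε) = p₀ − ε∇U(θ₀) and θ*(ε) = θ₀ + ε∇K(p*(ε)), and let H(θ, p) = U(θ) + K(p). Then, as ε → 0⁺, H(θ*(ε), p*(ε)) − H(θ₀, p₀) − (ε²/2)·(⟨∇K(p₀), ∇²U(θ₀)[∇K(p₀)]⟩ − ⟨∇U(θ₀), ∇²K(p₀)[∇U(θ₀)]⟩) = O(ε³). -/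
/-!
Expand `U` at `θ₀` and `K` at `p₀` to second order with remainders `O(‖h‖³)`. Such a remainder
bound follows from the mean value inequality once the derivative of the remainder is `O(‖h‖²)`,
and by symmetry of the Hessian that derivative is the first-order remainder of `fderiv f`.
Along the step, `θ* - θ₀ = ε ∇K(p*)` with `∇K(p*) = ∇K(p₀) - ε ∇²K(p₀) ∇U(θ₀) + O(ε²)`:
the first-order terms `±ε ⟪∇U(θ₀), ∇K(p₀)⟫` cancel and the `ε²` terms combine to the stated
leading term.
-/

open Asymptotics RealInnerProductSpace Filter Metric Topology InnerProductSpace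

theorem Asymptotics.IsBigO.comp_isBigO_norm_pow {α E F : Type*} [NormedAddCommGroup E]
    [Norm F] {l : Filter α} {R : E → F} {n : ℕ} (hR : R =O[𝓝 0] fun y => ‖y‖ ^ n)
    {h : α → E} {u : α → ℝ} (hh : h =O[l] u) (hu : Tendsto u l (𝓝 0)) :
    (fun t => R (h t)) =O[l] fun t => u t ^ n :=
  (hR.comp_tendsto (hh.trans_tendsto hu)).trans (hh.norm_left.pow n)

section TaylorNormedSpace

variable {E F : Type*} [NormedAddCommGroup E] [NormedSpace ℝ E]
  [NormedAddCommGroup F] [NormedSpace ℝ F]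

theorem isBigO_norm_pow_succ_of_fderiv {R : E → F} {n : ℕ}
    (hR : ∀ᶠ y in 𝓝 0, DifferentiableAt ℝ R y) (h0 : R 0 = 0)
    (hdR : fderiv ℝ R =O[𝓝 0] fun y => ‖y‖ ^ n) :
    R =O[𝓝 0] fun y => ‖y‖ ^ (n + 1) := by
  obtain ⟨C, hC, hbound⟩ := hdR.exists_nonneg
  obtain ⟨δ, hδ, hball⟩ := eventually_nhds_iff_ball.mp (hR.and hbound.bound)
  refine .of_bound C (eventually_of_mem (ball_mem_nhds 0 hδ) fun h hh => ?_)
  have hsub : closedBall (0 : E) ‖h‖ ⊆ ball 0 δ :=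
    closedBall_subset_ball (by simpa using hh)
  have hderiv (y) (hy : y ∈ closedBall (0 : E) ‖h‖) : ‖fderiv ℝ R y‖ ≤ C * ‖h‖ ^ n :=
    calc ‖fderiv ℝ R y‖ ≤ C * ‖‖y‖ ^ n‖ := (hball y (hsub hy)).2
      _ ≤ C * ‖h‖ ^ n := by
        rw [norm_pow, norm_norm]
        gcongr
        simpa using hy
  have hmv := (convex_closedBall (0 : E) ‖h‖).norm_image_sub_le_of_norm_fderiv_le
    (fun y hy => (hball y (hsub hy)).1) hderiv (mem_closedBall_self (norm_nonneg h))
    (by simp : h ∈ closedBall (0 : E) ‖h‖)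
  simpa [h0, pow_succ, mul_assoc] using hmv

theorem ContDiffAt.eventually_differentiableAt_add {f : E → F} {x : E} {n : ℕ}
    (hf : ContDiffAt ℝ n f x) (hn : n ≠ 0) :
    ∀ᶠ h in 𝓝 (0 : E), DifferentiableAt ℝ f (x + h) :=
  ((continuous_const_add x).tendsto' 0 x (add_zero x)).eventually <|
    (hf.eventually (by simp)).mono fun _ hy => hy.differentiableAt (by exact_mod_cast hn)

theorem DifferentiableAt.hasFDerivAt_sub_sub_fderiv {f : E → F} {x h : E}
    (hf : DifferentiableAt ℝ f (x + h)) :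
    HasFDerivAt (fun h => f (x + h) - f x - fderiv ℝ f x h)
      (fderiv ℝ f (x + h) - fderiv ℝ f x) h := by
  refine (((hf.hasFDerivAt.comp h ((hasFDerivAt_id h).const_add x)).sub_const (f x)).sub
    (fderiv ℝ f x).hasFDerivAt).congr_fderiv ?_
  ext v
  simp

theorem ContDiffAt.isBigO_taylor_one {f : E → F} {x : E} (hf : ContDiffAt ℝ 2 f x) :
    (fun h => f (x + h) - f x - fderiv ℝ f x h) =O[𝓝 0] fun h => ‖h‖ ^ 2 := by
  have hderiv := (hf.eventually_differentiableAt_add two_ne_zero).mono fun _ hh =>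
    hh.hasFDerivAt_sub_sub_fderiv
  refine isBigO_norm_pow_succ_of_fderiv (hderiv.mono fun _ hh => hh.differentiableAt) (by simp) ?_
  have hf' : DifferentiableAt ℝ (fderiv ℝ f) x :=
    (hf.fderiv_right (m := 1) le_rfl).differentiableAt one_ne_zero
  refine .congr' ?_ (hderiv.mono fun _ hh => hh.fderiv.symm) (.of_forall fun _ => pow_one _)
  simpa [Function.comp_def] using
    (hf'.isBigO_sub.comp_tendsto ((continuous_const_add x).tendsto' 0 x (add_zero x))).norm_right

theorem ContDiffAt.isBigO_taylor_two {f : E → F} {x : E} (hf : ContDiffAt ℝ 3 f x) :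
    (fun h => f (x + h) - f x - fderiv ℝ f x h - (2⁻¹ : ℝ) • fderiv ℝ (fderiv ℝ f) x h h)
      =O[𝓝 0] fun h => ‖h‖ ^ 3 := by
  set B := fderiv ℝ (fderiv ℝ f) x
  have hsymm : IsSymmSndFDerivAt ℝ f x := hf.isSymmSndFDerivAt (by simp; norm_num)
  have hquad (h : E) : HasFDerivAt (fun h => B h h) ((2 : ℝ) • B h) h := by
    refine (B.hasFDerivAt.clm_apply (hasFDerivAt_id h)).congr_fderiv ?_
    ext v
    simpa [two_smul] using hsymm v h
  have hderiv : ∀ᶠ h in 𝓝 (0 : E), HasFDerivAt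
      (fun h => f (x + h) - f x - fderiv ℝ f x h - (2⁻¹ : ℝ) • B h h)
      (fderiv ℝ f (x + h) - fderiv ℝ f x - B h) h :=
    (hf.eventually_differentiableAt_add three_ne_zero).mono fun h hh =>
      (hh.hasFDerivAt_sub_sub_fderiv.sub ((hquad h).const_smul (2⁻¹ : ℝ))).congr_fderiv
        (by ext v; simp [smul_smul])
  refine isBigO_norm_pow_succ_of_fderiv (hderiv.mono fun _ hh => hh.differentiableAt) (by simp) ?_
  refine .congr' ?_ (hderiv.mono fun _ hh => hh.fderiv.symm) .rfl
  exact (hf.fderiv_right (m := 2) le_rfl).isBigO_taylor_one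

end TaylorNormedSpace

section Gradient

variable {E : Type*} [NormedAddCommGroup E] [InnerProductSpace ℝ E] [CompleteSpace E]

theorem fderiv_fderiv_apply_eq_inner_fderiv_gradient (f : E → ℝ) (x v w : E) :
    fderiv ℝ (fderiv ℝ f) x v w = ⟪fderiv ℝ (gradient f) x v, w⟫ := by
  rw [← toDual_comp_gradient, LinearIsometryEquiv.comp_fderiv]
  rfl

theorem contDiffAt_gradient {f : E → ℝ} {x : E} {n : ℕ} (hf : ContDiffAt ℝ (n + 1) f x) :
    ContDiffAt ℝ n (gradient f) x :=
  (toDual ℝ E).symm.contDiff.contDiffAt.comp x (hf.fderiv_right le_rfl)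

theorem ContDiffAt.isBigO_taylor_two_gradient {f : E → ℝ} {x : E} (hf : ContDiffAt ℝ 3 f x) :
    (fun h => f (x + h) - f x - ⟪gradient f x, h⟫ - 2⁻¹ * ⟪h, fderiv ℝ (gradient f) x h⟫)
      =O[𝓝 0] fun h => ‖h‖ ^ 3 := by
  simpa [inner_gradient_left, fderiv_fderiv_apply_eq_inner_fderiv_gradient, real_inner_comm]
    using hf.isBigO_taylor_two

theorem symplecticEuler_energy_error_isBigO_nhds {U K : E → ℝ} {θ₀ p₀ : E}
    (hU : ContDiffAt ℝ 3 U θ₀) (hK : ContDiffAt ℝ 3 K p₀) :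
    (fun ε : ℝ =>
        (U (θ₀ + ε • gradient K (p₀ - ε • gradient U θ₀)) + K (p₀ - ε • gradient U θ₀))
          - (U θ₀ + K p₀)
          - (ε ^ 2 / 2) *
              (⟪gradient K p₀, fderiv ℝ (gradient U) θ₀ (gradient K p₀)⟫
                - ⟪gradient U θ₀, fderiv ℝ (gradient K) p₀ (gradient U θ₀)⟫))
      =O[𝓝 0] fun ε : ℝ => ε ^ 3 := by
  set a := gradient U θ₀
  set b := gradient K p₀
  set A := fderiv ℝ (gradient U) θ₀
  set B := fderiv ℝ (gradient K) p₀
  set g : ℝ → E := fun ε => gradient K (p₀ - ε • a)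
  have hKgrad : ContDiffAt ℝ 2 (gradient K) p₀ := contDiffAt_gradient (n := 2) hK
  have hg : DifferentiableAt ℝ g 0 := by
    refine DifferentiableAt.comp (g := gradient K) 0 ?_ (by fun_prop)
    simpa using hKgrad.differentiableAt (by simp)
  have hid : Tendsto (fun ε : ℝ => ε) (𝓝 0) (𝓝 0) := tendsto_id
  have hmom : (fun ε : ℝ => -(ε • a)) =O[𝓝 0] fun ε => ε :=
    .of_bound ‖a‖ (.of_forall fun ε => by simp [norm_smul, mul_comm])
  have hpos : (fun ε : ℝ => ε • g ε) =O[𝓝 0] fun ε => ε := by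
    simpa using (isBigO_refl (fun ε : ℝ => ε) _).smul (hg.continuousAt.tendsto.isBigO_one ℝ)
  have hTaylorU := hU.isBigO_taylor_two_gradient.comp_isBigO_norm_pow hpos hid
  have hTaylorK := hK.isBigO_taylor_two_gradient.comp_isBigO_norm_pow hmom hid
  have hTaylorGradK := hKgrad.isBigO_taylor_one.comp_isBigO_norm_pow hmom hid
  have hCross : (fun ε : ℝ => ε * ⟪a, gradient K (p₀ + -(ε • a)) - b - B (-(ε • a))⟫)
      =O[𝓝 0] fun ε => ε ^ 3 :=
    ((isBigO_refl (fun ε : ℝ => ε) _).mul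
      ((innerSL ℝ a).isBigO_comp _ _ |>.trans hTaylorGradK)).congr_right fun ε => by ring
  have hHessDeriv := (hg.inner ℝ (A.differentiableAt.comp 0 hg)).isBigO_sub
  have hHess : (fun ε : ℝ => ε ^ 2 / 2 * (⟪g ε, A (g ε)⟫ - ⟪b, A b⟫)) =O[𝓝 0] fun ε => ε ^ 3 := by
    refine (((isBigO_refl (fun ε : ℝ => ε ^ 2) _).mul hHessDeriv).const_mul_left 2⁻¹).congr
      (fun ε => ?_) (fun ε => by ring)
    simp only [Function.comp_apply, g, zero_smul, sub_zero, b]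
    ring
  refine (((hTaylorU.add hTaylorK).add hCross).add hHess).congr_left fun ε => ?_
  simp only [← sub_eq_add_neg, map_neg, map_smul, inner_neg_left, inner_neg_right,
    real_inner_smul_left, real_inner_smul_right, inner_sub_right, real_inner_comm a b,
    a, b, A, B, g]
  ring

end Gradient

theorem symplectic_euler_energy_error_general (d : ℕ)
    (U K : EuclideanSpace ℝ (Fin d) → ℝ) (hU : ContDiff ℝ 3 U) (hK : ContDiff ℝ 3 K)
    (θ₀ p₀ : EuclideanSpace ℝ (Fin d)) :
    (fun ε : ℝ =>
        (U (θ₀ + ε • gradient K (p₀ - ε • gradient U θ₀)) + K (p₀ - ε • gradient U θ₀))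
          - (U θ₀ + K p₀)
          - (ε ^ 2 / 2) *
              (⟪gradient K p₀, fderiv ℝ (gradient U) θ₀ (gradient K p₀)⟫
                - ⟪gradient U θ₀, fderiv ℝ (gradient K) p₀ (gradient U θ₀)⟫))
      =O[nhdsWithin 0 (Set.Ioi 0)] fun ε : ℝ => ε ^ 3 :=
  (symplecticEuler_energy_error_isBigO_nhds hU.contDiffAt hK.contDiffAt).mono nhdsWithin_le_nhds

/-- Energy error of the symplectic Euler step with explicit leading term: with
`p*(ε) = p₀ − ε∇U(θ₀)`, `θ*(ε) = θ₀ + ε∇K(p*(ε))` and `H(θ, p) = U(θ) + K(p)`,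
as `ε → 0⁺`,
`H(θ*(ε), p*(ε)) − H(θ₀, p₀)
  − (ε²/2)·(⟨∇K(p₀), ∇²U(θ₀)[∇K(p₀)]⟩ − ⟨∇U(θ₀), ∇²K(p₀)[∇U(θ₀)]⟩) = O(ε³)`. -/
theorem symplectic_euler_energy_error (d : ℕ) (hd : 1 ≤ d)
    (U K : EuclideanSpace ℝ (Fin d) → ℝ) (hU : ContDiff ℝ 3 U) (hK : ContDiff ℝ 3 K)
    (θ₀ p₀ : EuclideanSpace ℝ (Fin d)) :
    (fun ε : ℝ =>
        (U (θ₀ + ε • gradient K (p₀ - ε • gradient U θ₀)) + K (p₀ - ε • gradient U θ₀))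
          - (U θ₀ + K p₀)
          - (ε ^ 2 / 2) *
              (⟪gradient K p₀, fderiv ℝ (gradient U) θ₀ (gradient K p₀)⟫
                - ⟪gradient U θ₀, fderiv ℝ (gradient K) p₀ (gradient U θ₀)⟫))
      =O[nhdsWithin 0 (Set.Ioi 0)] fun ε : ℝ => ε ^ 3 :=
  symplectic_euler_energy_error_general d U K hU hK θ₀ p₀
end
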